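/- For every skew-symmetric k×k complex matrix ψ, the radical of the quadratic form q_ψ on 2×k complex matrices equals {X ∈ M_{2,k}(ℂ) : X·ψ = 0}, that is, the set of matrices both of whose rows lie in the kernel of ψ. -/
import Mathlib


open Matrix

/-- The bilinear map `(X, Y) ↦ X₁ ψ Y₂ᵀ` on pairs of `2 × k` complex matrices,
where `X₁` is the first row of `X` and `Y₂` is the second row of `Y`. -/
noncomputable def grassAux {k : ℕ} (ψ : Matrix (Fin k) (Fin k) ℂ) :
    Matrix (Fin 2) (Fin k) ℂ →ₗ[ℂ] Matrix (Fin 2) (Fin k) ℂ →ₗ[ℂ] ℂ :=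
  LinearMap.mk₂ ℂ (fun X Y => X 0 ⬝ᵥ ψ *ᵥ Y 1)
    (fun X X' Y => by
      simp [show (X + X') 0 = X 0 + X' 0 from rfl, add_dotProduct])
    (fun c X Y => by
      simp [show (c • X) 0 = c • X 0 from rfl, smul_dotProduct, smul_eq_mul])
    (fun X Y Y' => by
      simp [show (Y + Y') 1 = Y 1 + Y' 1 from rfl, mulVec_add, dotProduct_add])
    (fun c X Y => by
      simp [show (c • Y) 1 = c • Y 1 from rfl, mulVec_smul, dotProduct_smul,
        smul_eq_mul])

/-- The symmetric bilinear form associated to the quadratic form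
`q_ψ(X) = X₁ ψ X₂ᵀ = Σ_{i<j} ψ_{ij}(X_{1i} X_{2j} − X_{1j} X_{2i})`
(for `ψ` skew-symmetric) on `2 × k` complex matrices. -/
noncomputable def grassBilin {k : ℕ} (ψ : Matrix (Fin k) (Fin k) ℂ) :
    Matrix (Fin 2) (Fin k) ℂ →ₗ[ℂ] Matrix (Fin 2) (Fin k) ℂ →ₗ[ℂ] ℂ :=
  (2⁻¹ : ℂ) • (grassAux ψ + (grassAux ψ).flip)


/-- For a skew-symmetric `k × k` complex matrix `ψ`, the radical of the
quadratic form `q_ψ` on `2 × k` complex matrices equals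
`{X : X · ψ = 0}`, i.e. the set of matrices both of whose rows lie in the
kernel of `ψ`. -/
theorem grass_quadric_radical {k : ℕ} (ψ : Matrix (Fin k) (Fin k) ℂ)
    (hψ : ψᵀ = -ψ) :
    {X : Matrix (Fin 2) (Fin k) ℂ | ∀ Y : Matrix (Fin 2) (Fin k) ℂ,
        grassBilin ψ X Y = 0} =
      {X : Matrix (Fin 2) (Fin k) ℂ | X * ψ = 0} := by
  have hrow : ∀ (X : Matrix (Fin 2) (Fin k) ℂ) (i : Fin 2), (X * ψ) i = X i ᵥ* ψ := by
    intro X i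
    funext j
    simp [Matrix.mul_apply, Matrix.vecMul, dotProduct]
  have hmv : ∀ v : Fin k → ℂ, ψ *ᵥ v = -(v ᵥ* ψ) := by
    intro v
    have : ψ *ᵥ v = v ᵥ* ψᵀ := by
      funext i
      simp [Matrix.mulVec, Matrix.vecMul, dotProduct, Matrix.transpose_apply,
        mul_comm]
    rw [this, hψ]
    funext i
    simp [Matrix.vecMul, dotProduct]
  have key : ∀ X Y : Matrix (Fin 2) (Fin k) ℂ,
      grassBilin ψ X Y = 2⁻¹ * ((X * ψ) 0 ⬝ᵥ Y 1 - Y 0 ⬝ᵥ (X * ψ) 1) := by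
    intro X Y
    have h1 : X 0 ⬝ᵥ ψ *ᵥ Y 1 = (X * ψ) 0 ⬝ᵥ Y 1 := by
      rw [Matrix.dotProduct_mulVec, hrow]
    have h2 : Y 0 ⬝ᵥ ψ *ᵥ X 1 = -(Y 0 ⬝ᵥ (X * ψ) 1) := by
      rw [hmv, hrow, dotProduct_neg]
    simp only [grassBilin, grassAux, LinearMap.smul_apply, LinearMap.add_apply,
      LinearMap.flip_apply, LinearMap.mk₂_apply, smul_eq_mul, h1, h2]
    ring
  ext X
  simp only [Set.mem_setOf_eq]
  constructor
  · intro h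
    funext i j
    fin_cases i
    · have := h (Matrix.of ![0, Pi.single j 1])
      rw [key,
        show (Matrix.of ![0, Pi.single j 1] : Matrix (Fin 2) (Fin k) ℂ) 0 = 0 from rfl,
        show (Matrix.of ![0, Pi.single j 1] : Matrix (Fin 2) (Fin k) ℂ) 1
          = Pi.single j 1 from rfl,
        dotProduct_single, zero_dotProduct, mul_one, sub_zero] at this
      have h2 : ((2:ℂ)⁻¹) ≠ 0 := by norm_num
      exact (mul_eq_zero.mp this).resolve_left h2
    · have := h (Matrix.of ![Pi.single j 1, 0])
      rw [key,
        show (Matrix.of ![Pi.single j 1, 0] : Matrix (Fin 2) (Fin k) ℂ) 0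
          = Pi.single j 1 from rfl,
        show (Matrix.of ![Pi.single j 1, 0] : Matrix (Fin 2) (Fin k) ℂ) 1 = 0 from rfl,
        dotProduct_zero, single_dotProduct, one_mul, zero_sub,
        mul_neg, neg_eq_zero] at this
      have h2 : ((2:ℂ)⁻¹) ≠ 0 := by norm_num
      exact (mul_eq_zero.mp this).resolve_left h2
  · intro h Y
    rw [key, h,
      show ((0 : Matrix (Fin 2) (Fin k) ℂ)) 0 = 0 from rfl,
      show ((0 : Matrix (Fin 2) (Fin k) ℂ)) 1 = 0 from rfl]
    simp
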